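/- For every graph G, the edge-treewidth of G is at most Δ₂(G)·tw(G), where Δ₂(G) is the biconnected maximum degree of G (the maximum, over 2-connected components C of G, of the maximum degree of C) and tw(G) is the treewidth of G. -/

import Mathlib

open SimpleGraph

/-- `x` is a (reflexive) ancestor of `y` in the tree `T` rooted at `r`,
expressed metrically: `x` lies on the unique `r`–`y` path. -/
def AncIn {V : Type*} (T : SimpleGraph V) (r x y : V) : Prop :=
  T.dist r x + T.dist x y = T.dist r y

/-- A tree-layout of `G`: a rooted tree on the vertex set of `G` such that the endpoints
of every edge of `G` are in ancestor-descendant relation. -/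
structure TreeLayout {V : Type*} (G : SimpleGraph V) where
  tree : SimpleGraph V
  isTree : tree.IsTree
  root : V
  layout : ∀ ⦃x y : V⦄, G.Adj x y → AncIn tree root x y ∨ AncIn tree root y x

namespace TreeLayout

variable {V : Type*} {G : SimpleGraph V}

/-- `x` is an ancestor of `y` (reflexively) in the tree-layout. -/
def Anc (L : TreeLayout G) (x y : V) : Prop := AncIn L.tree L.root x y

def StrictAnc (L : TreeLayout G) (x y : V) : Prop := L.Anc x y ∧ x ≠ y

/-- The bandwidth of the tree-layout is at most `k`: neighbours in `G` are at
tree-distance at most `k`. -/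
def BandwidthLE (L : TreeLayout G) (k : ℕ) : Prop :=
  ∀ ⦃x y : V⦄, G.Adj x y → L.tree.dist x y ≤ k

/-- The interval `[a,b]` of the tree-layout: vertices on the tree path from `a` to `b`
(for `a` an ancestor of `b`). -/
def interval (L : TreeLayout G) (a b : V) : Set V := {z : V | L.Anc a z ∧ L.Anc z b}

end TreeLayout

/-- Treebandwidth: the minimum bandwidth over tree-layouts of `G`. -/
noncomputable def treebandwidth {V : Type*} (G : SimpleGraph V) : ℕ :=
  sInf {k | ∃ L : TreeLayout G, L.BandwidthLE k}

/-- Treedepth: the minimum depth (number of vertices on a root-to-leaf path) of a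
tree-layout (elimination tree) of `G`. -/
noncomputable def treedepth {V : Type*} (G : SimpleGraph V) : ℕ :=
  sInf {k | ∃ L : TreeLayout G, ∀ v : V, L.tree.dist L.root v + 1 ≤ k}

/-- A tree-partition of `G`: a partition of `V(G)` indexed by the nodes of a tree such that
every edge of `G` has both ends in one part or in parts indexed by adjacent nodes. -/
structure TreePartition {V : Type*} (G : SimpleGraph V) where
  ι : Type
  tree : SimpleGraph ι
  isTree : tree.IsTree
  part : V → ι
  adj : ∀ ⦃x y : V⦄, G.Adj x y → part x = part y ∨ tree.Adj (part x) (part y)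

/-- Tree-partition-width: minimum over tree-partitions of the maximum part size. -/
noncomputable def treePartitionWidth {V : Type*} (G : SimpleGraph V) : ℕ :=
  sInf {k | ∃ P : TreePartition G, ∀ i : P.ι, {v : V | P.part v = i}.ncard ≤ k}

/-- The connected component of `v` in the subgraph of `G` induced by `S`. -/
def connCompIn {V : Type*} (G : SimpleGraph V) (S : Set V) (v : V) : Set V :=
  {w : V | ∃ (hv : v ∈ S) (hw : w ∈ S), (G.induce S).Reachable ⟨v, hv⟩ ⟨w, hw⟩}

/-- `RootedTreedepthLE G U S n` expresses `td(G[S], U) ≤ n` for the rooted treedepth: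
it is `0` when `S` misses `U`, and otherwise one may delete one vertex from each
connected component and recurse. -/
inductive RootedTreedepthLE {V : Type*} (G : SimpleGraph V) (U : Set V) : Set V → ℕ → Prop
  | base (S : Set V) (n : ℕ) (h : S ∩ U = ∅) : RootedTreedepthLE G U S n
  | step (S : Set V) (n : ℕ) (pick : ∀ v : V, v ∈ S → V)
      (hpick : ∀ (v : V) (hv : v ∈ S), pick v hv ∈ connCompIn G S v)
      (h : ∀ (v : V) (hv : v ∈ S),
        RootedTreedepthLE G U (connCompIn G S v \ {pick v hv}) n) :
      RootedTreedepthLE G U S (n + 1)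

/-- A `U`-rooted minor model of the path on `k` vertices in `G`. -/
structure RootedPathMinor {V : Type*} (G : SimpleGraph V) (U : Set V) (k : ℕ) where
  branch : Fin k → Set V
  connected : ∀ i, (G.induce (branch i)).Connected
  disjoint : ∀ i j, i ≠ j → Disjoint (branch i) (branch j)
  rooted : ∀ i, (branch i ∩ U).Nonempty
  adj : ∀ i j : Fin k, (j : ℕ) = (i : ℕ) + 1 → ∃ a ∈ branch i, ∃ b ∈ branch j, G.Adj a b

/-- A subdivision of the `k`-fan in `G` with universal (center) vertex `v`:
branch vertices `b 0, …, b (k-1)` of the path, internally disjoint spokes from `v`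
and internally disjoint path segments between consecutive branch vertices. -/
structure FanSubdivision {V : Type*} (G : SimpleGraph V) (v : V) (k : ℕ) where
  b : Fin k → V
  binj : Function.Injective b
  bne : ∀ i, b i ≠ v
  spoke : ∀ i : Fin k, G.Walk v (b i)
  spokePath : ∀ i, (spoke i).IsPath
  seg : ∀ (i : Fin k) (h : (i : ℕ) + 1 < k), G.Walk (b i) (b ⟨(i : ℕ) + 1, h⟩)
  segPath : ∀ i h, (seg i h).IsPath
  vNotinSeg : ∀ i h, v ∉ (seg i h).support
  spokeDisj : ∀ i j, i ≠ j →
    {x | x ∈ (spoke i).support} ∩ {x | x ∈ (spoke j).support} = {v}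
  spokeSegDisj : ∀ i j h,
    {x | x ∈ (spoke i).support} ∩ {x | x ∈ (seg j h).support} ⊆
      ({b i} : Set V) ∩ {b j, b ⟨(j : ℕ) + 1, h⟩}
  segDisj : ∀ i j hi hj, i ≠ j →
    {x | x ∈ (seg i hi).support} ∩ {x | x ∈ (seg j hj).support} ⊆
      ({b i, b ⟨(i : ℕ) + 1, hi⟩} : Set V) ∩ {b j, b ⟨(j : ℕ) + 1, hj⟩}

/-- A `p`-centered colouring: every (nonempty) connected induced subgraph either receives
more than `p` colours or has a uniquely coloured vertex. -/
def IsPCenteredColoring {V : Type*} (G : SimpleGraph V) (p : ℕ) (c : V → ℕ) : Prop :=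
  ∀ S : Set V, S.Nonempty → (G.induce S).Connected →
    p < (c '' S).ncard ∨ ∃ x ∈ S, ∀ y ∈ S, c y = c x → y = x

/-- Treewidth, characterised via tree-layouts: the minimum over tree-layouts of the maximum
over nodes `u` of the number of strict ancestors of `u` that are `G`-neighbours of some
descendant of `u` (including `u`). -/
noncomputable def treewidthTL {V : Type*} (G : SimpleGraph V) : ℕ :=
  sInf {k | ∃ L : TreeLayout G, ∀ u : V,
    {a : V | L.StrictAnc a u ∧ ∃ d : V, L.Anc u d ∧ G.Adj a d}.ncard ≤ k}

/-- The pruned subtree of `x` in a tree-layout: descendants of `x` (including `x`) having a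
neighbour of `x` among their own descendants. -/
def prunedSubtree {V : Type*} {G : SimpleGraph V} (L : TreeLayout G) (x : V) : Set V :=
  {y : V | L.Anc x y ∧ ∃ d : V, L.Anc y d ∧ G.Adj x d}

/-- Treespan: the minimum over tree-layouts of (maximum size of a pruned subtree minus one). -/
noncomputable def treespan {V : Type*} (G : SimpleGraph V) : ℕ :=
  sInf {k | ∃ L : TreeLayout G, ∀ x : V, (prunedSubtree L x).ncard ≤ k + 1}

/-- A tree decomposition of `G`. -/
structure TreeDecomp {V : Type*} (G : SimpleGraph V) where
  ι : Type
  tree : SimpleGraph ι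
  isTree : tree.IsTree
  bag : ι → Set V
  coverV : ∀ v : V, ∃ t, v ∈ bag t
  coverE : ∀ ⦃x y : V⦄, G.Adj x y → ∃ t, x ∈ bag t ∧ y ∈ bag t
  subtree : ∀ v : V, (tree.induce {t : ι | v ∈ bag t}).Connected

/-- Domino treewidth: minimum width over tree decompositions in which every vertex
belongs to at most two bags. -/
noncomputable def dominoTreewidth {V : Type*} (G : SimpleGraph V) : ℕ :=
  sInf {k | ∃ D : TreeDecomp G, (∀ v : V, {t : D.ι | v ∈ D.bag t}.ncard ≤ 2) ∧
    ∀ t : D.ι, (D.bag t).ncard ≤ k + 1}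

/-- Edge-treewidth via tree-layouts: the minimum over tree-layouts of the maximum over nodes
`u` of the number of edges with one endpoint a descendant of `u` (including `u`) and the other
a strict ancestor of `u`. -/
noncomputable def edgeTreewidth {V : Type*} (G : SimpleGraph V) : ℕ :=
  sInf {k | ∃ L : TreeLayout G, ∀ u : V,
    {p : V × V | L.StrictAnc p.1 u ∧ L.Anc u p.2 ∧ G.Adj p.1 p.2}.ncard ≤ k}

/-- `S` is a block (2-connected component) of `G`: a maximal connected set of vertices whose
induced subgraph has no cutvertex. -/
def IsBlock {V : Type*} (G : SimpleGraph V) (S : Set V) : Prop :=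
  S.Nonempty ∧ (G.induce S).Connected ∧
    (∀ x ∈ S, (G.induce (S \ {x})).Preconnected) ∧
    ∀ S' : Set V, S ⊆ S' → (G.induce S').Connected →
      (∀ x ∈ S', (G.induce (S' \ {x})).Preconnected) → S' = S

/-- Biconnected maximum degree: the maximum over blocks of `G` of the maximum degree
inside the block. -/
noncomputable def biconnMaxDegree {V : Type*} (G : SimpleGraph V) : ℕ :=
  sSup {d | ∃ (S : Set V) (v : V), IsBlock G S ∧ v ∈ S ∧ d = {w ∈ S | G.Adj v w}.ncard}

/-- `G` is 3-connected: more than 3 vertices, and removing any two vertices leaves it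
connected. -/
def ThreeConnected {V : Type*} (G : SimpleGraph V) : Prop :=
  3 < Nat.card V ∧ ∀ x y : V, (G.induce {v : V | v ≠ x ∧ v ≠ y}).Connected

/-- `G` has `H` as a minor (branch-set model). -/
def HasMinor {V W : Type*} (G : SimpleGraph V) (H : SimpleGraph W) : Prop :=
  ∃ B : W → Set V, (∀ w, (G.induce (B w)).Connected) ∧
    (∀ w w', w ≠ w' → Disjoint (B w) (B w')) ∧
    ∀ ⦃w w'⦄, H.Adj w w' → ∃ a ∈ B w, ∃ b ∈ B w', G.Adj a b

/-- Planarity via Wagner's theorem: no `K₅` minor and no `K₃,₃` minor. -/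
def PlanarWagner {V : Type*} (G : SimpleGraph V) : Prop :=
  ¬ HasMinor G (completeGraph (Fin 5)) ∧
    ¬ HasMinor G (completeBipartiteGraph (Fin 3) (Fin 3))

/-- A subdivision of the `k`-wheel in `G` with hub `v`. -/
structure WheelSubdivision {V : Type*} (G : SimpleGraph V) (v : V) (k : ℕ) where
  b : Fin k → V
  binj : Function.Injective b
  bne : ∀ i, b i ≠ v
  spoke : ∀ i : Fin k, G.Walk v (b i)
  spokePath : ∀ i, (spoke i).IsPath
  seg : ∀ i : Fin k, G.Walk (b i) (b (finRotate k i))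
  segPath : ∀ i, (seg i).IsPath
  vNotinSeg : ∀ i, v ∉ (seg i).support
  spokeDisj : ∀ i j, i ≠ j →
    {x | x ∈ (spoke i).support} ∩ {x | x ∈ (spoke j).support} = {v}
  spokeSegDisj : ∀ i j,
    {x | x ∈ (spoke i).support} ∩ {x | x ∈ (seg j).support} ⊆
      ({b i} : Set V) ∩ {b j, b (finRotate k j)}
  segDisj : ∀ i j, i ≠ j →
    {x | x ∈ (seg i).support} ∩ {x | x ∈ (seg j).support} ⊆
      ({b i, b (finRotate k i)} : Set V) ∩ {b j, b (finRotate k j)}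

/-- A subdivision of the `k`-dipole with poles `u`, `v`: `k` internally vertex-disjoint
`u`–`v` paths of length at least `2`. -/
structure DipoleSubdivision {V : Type*} (G : SimpleGraph V) (u v : V) (k : ℕ) where
  path : Fin k → G.Walk u v
  isPath : ∀ i, (path i).IsPath
  len : ∀ i, 2 ≤ (path i).length
  disj : ∀ i j, i ≠ j →
    {x | x ∈ (path i).support} ∩ {x | x ∈ (path j).support} = ({u, v} : Set V)

/-- A separation of `G`. -/
def IsSeparation {V : Type*} (G : SimpleGraph V) (A B : Set V) : Prop :=
  A ∪ B = Set.univ ∧ ∀ a ∈ A \ B, ∀ b ∈ B \ A, ¬ G.Adj a b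

/-- `μ(X,Y)`: the minimum order of a separation `(A,B)` with `X ⊆ A` and `Y ⊆ B`. -/
noncomputable def muSep {V : Type*} (G : SimpleGraph V) (X Y : Set V) : ℕ :=
  sInf {n | ∃ A B : Set V, IsSeparation G A B ∧ X ⊆ A ∧ Y ⊆ B ∧ (A ∩ B).ncard = n}

def IsMaximalClique {V : Type*} (G : SimpleGraph V) (K : Set V) : Prop :=
  G.IsClique K ∧ ∀ K' : Set V, G.IsClique K' → K ⊆ K' → K' = K

/-- `G` is proper chordal: it has a tree-layout in which every maximal clique is an
interval of a root-to-leaf path. -/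
def ProperChordal {V : Type*} (G : SimpleGraph V) : Prop :=
  ∃ L : TreeLayout G, ∀ K : Set V, IsMaximalClique G K →
    ∃ a b : V, L.Anc a b ∧ K = L.interval a b

/-- A topological-minor model (subdivision embedding) of `H` in `G`. -/
structure TopMinorEmbedding {W V : Type*} (H : SimpleGraph W) (G : SimpleGraph V) where
  φ : W → V
  inj : Function.Injective φ
  path : ∀ ⦃a b : W⦄, H.Adj a b → G.Walk (φ a) (φ b)
  isPath : ∀ ⦃a b : W⦄ (h : H.Adj a b), (path h).IsPath
  branchOnPath : ∀ ⦃a b : W⦄ (h : H.Adj a b) (w : W),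
    φ w ∈ (path h).support → w = a ∨ w = b
  disj : ∀ ⦃a b c d : W⦄ (hab : H.Adj a b) (hcd : H.Adj c d), s(a, b) ≠ s(c, d) →
    {x | x ∈ (path hab).support} ∩ {x | x ∈ (path hcd).support} ⊆
      ({φ a, φ b} : Set V) ∩ {φ c, φ d}

/-- A subdivision of the star `K_{1,s}` in `H` with all leaves in `X`. -/
structure StarSubdivision {V : Type*} (H : SimpleGraph V) (X : Set V) (s : ℕ) where
  center : V
  leaf : Fin s → V
  leafInj : Function.Injective leaf
  leafX : ∀ i, leaf i ∈ X
  leafNe : ∀ i, leaf i ≠ center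
  path : ∀ i : Fin s, H.Walk center (leaf i)
  isPath : ∀ i, (path i).IsPath
  disj : ∀ i j, i ≠ j →
    {x | x ∈ (path i).support} ∩ {x | x ∈ (path j).support} = {center}

/-- The weight `w(t,U)` of a set `U` at a node `t` of a tree decomposition is at most `a`:
`|β(t) ∩ U|` plus the number of a suitable family of adhesions incident to `t` whose union
hits all paths from `β(t)` to `U ∖ β(t)` is at most `a`. -/
def WeightLE {V : Type*} {G : SimpleGraph V} (D : TreeDecomp G) (U : Set V) (t : D.ι)
    (a : ℕ) : Prop :=
  ∃ F : Set D.ι, (∀ s ∈ F, D.tree.Adj t s) ∧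
    (D.bag t ∩ U).ncard + F.ncard ≤ a ∧
    ∀ ⦃x y : V⦄ (p : G.Walk x y), x ∈ D.bag t → y ∈ U \ D.bag t →
      ∃ z ∈ p.support, ∃ s ∈ F, z ∈ D.bag t ∩ D.bag s

/-- The graph obtained from `G` by subdividing the edge `xy` into a path with `n + 1`
new internal vertices. -/
def subdivideEdge {V : Type*} (G : SimpleGraph V) (x y : V) (n : ℕ) :
    SimpleGraph (V ⊕ Fin (n + 1)) :=
  SimpleGraph.fromRel (fun a b =>
    (∃ u w : V, a = Sum.inl u ∧ b = Sum.inl w ∧ G.Adj u w ∧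
      ¬(u = x ∧ w = y) ∧ ¬(u = y ∧ w = x)) ∨
    (a = Sum.inl x ∧ b = Sum.inr 0) ∨
    (∃ i : Fin n, a = Sum.inr i.castSucc ∧ b = Sum.inr i.succ) ∨
    (a = Sum.inr (Fin.last n) ∧ b = Sum.inl y))

/-!
Take a tree-layout `L` of width `tw(G)` and normalise it: below the root, let `x` be an ancestor
of `y` exactly when `y` is reachable from `x` by a walk through `L`-descendants of `x`. This is
again the ancestor order of a rooted tree and still a tree-layout of `G`. In it, an edge `ad`
leaving the subtree of `u` has `a` among the at most `tw(G)` strict `L`-ancestors of `u` with a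
neighbour below `u`, and `d` in the set `X` of vertices reachable from `u` inside its `L`-subtree.
As `X` is connected and avoids `a`, any two neighbours of `a` in `X` close a cycle through `a`, so
all of them lie in one block together with `a`: there are at most `Δ₂(G)` of them.
-/

lemma Set.ncard_le_mul_ncard_of_fst_mem {α β : Type*} [Finite α] [Finite β] {P : Set (α × β)}
    {A : Set α} {n : ℕ} (hP : ∀ p ∈ P, p.1 ∈ A)
    (hn : ∀ a ∈ A, {b | (a, b) ∈ P}.ncard ≤ n) : P.ncard ≤ n * A.ncard := by
  classical
  have := Fintype.ofFinite α
  have := Fintype.ofFinite β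
  rw [Set.ncard_eq_toFinset_card' P, Set.ncard_eq_toFinset_card' A]
  refine Finset.card_le_mul_card_image_of_maps_to (f := Prod.fst) (by simpa using hP) n
    fun a ha => le_trans ?_ (hn a (Set.mem_toFinset.mp ha))
  rw [Set.ncard_eq_toFinset_card']
  refine Finset.card_le_card_of_injOn Prod.snd (fun p hp => ?_) fun p hp q hq h => ?_
  · simp only [Finset.coe_filter, Set.mem_toFinset, Set.mem_ofPred_eq] at hp
    obtain ⟨hp, rfl⟩ := hp
    simpa using hp
  · simp only [Finset.coe_filter, Set.mem_toFinset, Set.mem_ofPred_eq] at hp hq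
    exact Prod.ext (hp.2.trans hq.2.symm) h

namespace SimpleGraph

variable {V : Type*} {G : SimpleGraph V} {X : Set V} {u v x y z : V}

lemma Walk.dist_add_dist_of_mem_support {p : G.Walk u v} (hp : p.length = G.dist u v)
    (hx : x ∈ p.support) : G.dist u x + G.dist x v = G.dist u v := by
  classical
  have h₁ := G.dist_le (p.takeUntil x hx)
  have h₂ := G.dist_le (p.dropUntil x hx)
  have hlen := congrArg Walk.length (p.take_spec hx)
  have := (p.takeUntil x hx).reachable.dist_triangle_left v
  rw [Walk.length_append] at hlen
  omega

lemma Walk.IsPath.eq_of_mem_takeUntil_of_mem_dropUntil [DecidableEq V] {p : G.Walk u v}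
    (hp : p.IsPath) (hy : y ∈ p.support) (h₁ : z ∈ (p.takeUntil y hy).support)
    (h₂ : z ∈ (p.dropUntil y hy).support) : z = y := by
  have hnd := hp.support_nodup
  rw [← p.take_spec hy, Walk.support_append, List.nodup_append] at hnd
  rw [← Walk.cons_tail_support (p.dropUntil y hy), List.mem_cons] at h₂
  exact h₂.resolve_right fun h => hnd.2.2 z h₁ z h rfl

lemma Walk.IsPath.exists_walk_to_end_avoiding {p : G.Walk u v} (hp : p.IsPath)
    (hy : y ∈ p.support) (hyx : y ≠ x) :
    ∃ e ∈ ({u, v} : Set V), ∃ q : G.Walk y e,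
      ∀ z ∈ q.support, z ∈ p.support ∧ z ≠ x := by
  classical
  by_cases hxd : x ∈ (p.dropUntil y hy).support
  · have hxt : x ∉ (p.takeUntil y hy).support := fun hxt =>
      hyx (hp.eq_of_mem_takeUntil_of_mem_dropUntil hy hxt hxd).symm
    refine ⟨u, Or.inl rfl, (p.takeUntil y hy).reverse, fun z hz => ?_⟩
    rw [Walk.support_reverse, List.mem_reverse] at hz
    exact ⟨p.support_takeUntil_subset_support hy hz, fun h => hxt (h ▸ hz)⟩
  · exact ⟨v, Or.inr rfl, p.dropUntil y hy, fun z hz =>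
      ⟨p.support_dropUntil_subset_support hy hz, fun h => hxd (h ▸ hz)⟩⟩

lemma Reachable.exists_isPath_of_induce {hu : u ∈ X} {hv : v ∈ X}
    (h : (G.induce X).Reachable ⟨u, hu⟩ ⟨v, hv⟩) :
    ∃ p : G.Walk u v, p.IsPath ∧ ∀ z ∈ p.support, z ∈ X := by
  classical
  obtain ⟨q⟩ := h
  refine ⟨(q.map (Embedding.induce X).toHom).bypass, Walk.bypass_isPath _, fun z hz => ?_⟩
  obtain ⟨z', -, rfl⟩ :=
    List.mem_map.mp (Walk.support_map _ q ▸ Walk.support_bypass_subset_support _ hz)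
  exact z'.2

end SimpleGraph

section AncIn

open SimpleGraph

variable {V : Type*} {T : SimpleGraph V} {r a b x y z : V}

lemma ancIn_refl (T : SimpleGraph V) (r x : V) : AncIn T r x x := by
  simp [AncIn]

lemma ancIn_root (T : SimpleGraph V) (r x : V) : AncIn T r r x := by
  simp [AncIn]

lemma ancIn_antisymm (hT : T.Connected) (hxy : AncIn T r x y) (hyx : AncIn T r y x) :
    x = y := by
  have := T.dist_comm (u := x) (v := y)
  unfold AncIn at hxy hyx
  exact (hT x y).dist_eq_zero_iff.mp (by omega)

lemma ancIn_trans (hT : T.Connected) (hxy : AncIn T r x y) (hyz : AncIn T r y z) :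
    AncIn T r x z := by
  have := hT.dist_triangle (u := x) (v := y) (w := z)
  have := hT.dist_triangle (u := r) (v := x) (w := z)
  unfold AncIn at *
  omega

lemma ancIn_of_mem_support {p : T.Walk r y} (hp : p.length = T.dist r y) (hx : x ∈ p.support) :
    AncIn T r x y :=
  p.dist_add_dist_of_mem_support hp hx

lemma AncIn.ancIn_of_mem_support (hT : T.Connected) (ha : AncIn T r a y) {q : T.Walk a y}
    (hq : q.length = T.dist a y) (hb : b ∈ q.support) : AncIn T r a b := by
  have := q.dist_add_dist_of_mem_support hq hb
  have := hT.dist_triangle (u := r) (v := a) (w := b)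
  have := hT.dist_triangle (u := r) (v := b) (w := y)
  unfold AncIn at *
  omega

lemma AncIn.mem_support (hT : T.IsTree) (hx : AncIn T r x y) {p : T.Walk r y}
    (hp : p.length = T.dist r y) : x ∈ p.support := by
  obtain ⟨p₁, hp₁⟩ := (hT.connected r x).exists_walk_length_eq_dist
  obtain ⟨p₂, hp₂⟩ := (hT.connected x y).exists_walk_length_eq_dist
  have hlen : (p₁.append p₂).length = T.dist r y := by
    rw [Walk.length_append, hp₁, hp₂]
    exact hx
  have := (hT.isAcyclic.subsingleton_path r y).elim ⟨p, p.isPath_of_length_eq_dist hp⟩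
    ⟨_, (p₁.append p₂).isPath_of_length_eq_dist hlen⟩
  rw [Subtype.mk.injEq] at this
  rw [this, Walk.mem_support_append_iff]
  exact Or.inl p₁.end_mem_support

lemma ancIn_total_of_ancIn (hT : T.IsTree) (ha : AncIn T r a y) (hb : AncIn T r b y) :
    AncIn T r a b ∨ AncIn T r b a := by
  classical
  obtain ⟨p, hp⟩ := (hT.connected r y).exists_walk_length_eq_dist
  have ha' := ha.mem_support hT hp
  have hb' := hb.mem_support hT hp
  rw [← p.take_spec ha', Walk.mem_support_append_iff] at hb'
  rcases hb' with hb' | hb'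
  · exact Or.inr (ancIn_of_mem_support
      (length_eq_dist_of_subwalk hp (p.isSubwalk_takeUntil ha')) hb')
  · exact Or.inl (ha.ancIn_of_mem_support hT.connected
      (length_eq_dist_of_subwalk hp (p.isSubwalk_dropUntil ha')) hb')

end AncIn

namespace TreeLayout

variable {V : Type*} {G : SimpleGraph V} (L : TreeLayout G) {a b x y z : V}

lemma anc_refl (x : V) : L.Anc x x := ancIn_refl _ _ _

lemma root_anc (x : V) : L.Anc L.root x := ancIn_root _ _ _

lemma Anc.trans {L : TreeLayout G} (hxy : L.Anc x y) (hyz : L.Anc y z) : L.Anc x z :=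
  ancIn_trans L.isTree.connected hxy hyz

lemma Anc.antisymm {L : TreeLayout G} (hxy : L.Anc x y) (hyx : L.Anc y x) : x = y :=
  ancIn_antisymm L.isTree.connected hxy hyx

lemma anc_total_of_anc {L : TreeLayout G} (ha : L.Anc a y) (hb : L.Anc b y) :
    L.Anc a b ∨ L.Anc b a :=
  ancIn_total_of_ancIn L.isTree ha hb

end TreeLayout

/-- The ancestor order of a rooted tree. -/
structure RootedTreeOrder (V : Type*) where
  le : V → V → Prop
  refl : ∀ x, le x x
  antisymm : ∀ {x y}, le x y → le y x → x = y
  trans : ∀ {x y z}, le x y → le y z → le x z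
  total_of_le : ∀ {a b x}, le a x → le b x → le a b ∨ le b a
  root : V
  root_le : ∀ x, le root x

namespace RootedTreeOrder

open SimpleGraph

variable {V : Type*} (R : RootedTreeOrder V) {u v x y : V}

noncomputable def depth (x : V) : ℕ := {a | R.le a x ∧ a ≠ x}.ncard

def graph : SimpleGraph V := fromRel fun x y => R.le x y ∧ R.depth x + 1 = R.depth y

variable {R}

lemma graph_adj_iff : R.graph.Adj x y ↔
    R.le x y ∧ R.depth x + 1 = R.depth y ∨ R.le y x ∧ R.depth y + 1 = R.depth x := by
  rw [graph, fromRel_adj, and_iff_right_iff_imp]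
  rintro (⟨-, h⟩ | ⟨-, h⟩) rfl <;> omega

lemma depth_le_depth_add_length (w : R.graph.Walk x y) : R.depth y ≤ R.depth x + w.length := by
  induction w with
  | nil => simp
  | cons h w ih =>
    rw [graph_adj_iff] at h
    rw [Walk.length_cons]
    omega

lemma le_of_walk (w : R.graph.Walk x y) (hw : R.depth x + w.length = R.depth y) : R.le x y := by
  induction w with
  | nil => exact R.refl _
  | cons h w ih =>
    have := depth_le_depth_add_length w
    rw [Walk.length_cons] at hw
    rcases graph_adj_iff.mp h with h | h
    · exact R.trans h.1 (ih (by omega))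
    · omega

variable [Finite V]

lemma depth_lt_depth (hxy : R.le x y) (hne : x ≠ y) : R.depth x < R.depth y := by
  refine Set.ncard_lt_ncard ⟨fun a ⟨hax, hne'⟩ => ⟨R.trans hax hxy, fun hay => ?_⟩,
    fun h => (h ⟨hxy, hne⟩).2 rfl⟩ (Set.toFinite _)
  exact hne' (R.antisymm hax (hay ▸ hxy))

lemma depth_le_depth (hxy : R.le x y) : R.depth x ≤ R.depth y := by
  rcases eq_or_ne x y with rfl | hne
  · rfl
  · exact (depth_lt_depth hxy hne).le

lemma eq_of_le_of_depth_le (hxy : R.le x y) (h : R.depth y ≤ R.depth x) : x = y := by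
  by_contra hne
  exact (depth_lt_depth hxy hne).not_ge h

lemma depth_root : R.depth R.root = 0 :=
  (Set.ncard_eq_zero (Set.toFinite _)).mpr <|
    Set.eq_empty_of_forall_notMem fun a ⟨ha, hne⟩ => hne (R.antisymm ha (R.root_le a))

lemma exists_parent (hy : y ≠ R.root) :
    ∃ p, R.le p y ∧ R.depth p + 1 = R.depth y ∧ ∀ a, R.le a y → a ≠ y → R.le a p := by
  set A := {a | R.le a y ∧ a ≠ y}
  obtain ⟨p, hpA, hmax⟩ := Set.exists_max_image A R.depth (Set.toFinite _)
    ⟨R.root, R.root_le y, fun h => hy h.symm⟩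
  have hle : ∀ a ∈ A, R.le a p := fun a ha =>
    (R.total_of_le ha.1 hpA.1).elim id fun hpa => eq_of_le_of_depth_le hpa (hmax a ha) ▸ R.refl p
  have hA : A = insert p {a | R.le a p ∧ a ≠ p} := by
    ext a
    refine ⟨fun ha => or_iff_not_imp_left.mpr fun hap => ⟨hle a ha, hap⟩, ?_⟩
    rintro (rfl | ⟨hap, hne⟩)
    · exact hpA
    · exact ⟨R.trans hap hpA.1, fun h => hne (R.antisymm hap (h ▸ hpA.1))⟩
  refine ⟨p, hpA.1, ?_, fun a ha hne => hle a ⟨ha, hne⟩⟩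
  rw [depth, depth, show {a | R.le a y ∧ a ≠ y} = _ from hA,
    Set.ncard_insert_of_notMem (fun h => h.2 rfl) (Set.toFinite _)]

lemma exists_walk_of_le (hxy : R.le x y) :
    ∃ w : R.graph.Walk x y, R.depth x + w.length = R.depth y := by
  induction hn : R.depth y using Nat.strong_induction_on generalizing y with
  | _ n ih =>
    by_cases hxy' : x = y
    · subst hxy'
      exact ⟨Walk.nil, by simp [hn]⟩
    have hy : y ≠ R.root := fun h => hxy' (R.antisymm hxy (h ▸ R.root_le x))
    obtain ⟨p, hpy, hdp, hmax⟩ := exists_parent hy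
    obtain ⟨w, hw⟩ := ih _ (by omega) (hmax x hxy hxy') rfl
    refine ⟨w.concat (graph_adj_iff.mpr (Or.inl ⟨hpy, hdp⟩)), ?_⟩
    rw [Walk.length_concat]
    omega

lemma graph_connected : R.graph.Connected :=
  (connected_iff_exists_forall_reachable _).mpr
    ⟨R.root, fun x => (exists_walk_of_le (R.root_le x)).choose.reachable⟩

lemma depth_add_dist (hxy : R.le x y) : R.depth x + R.graph.dist x y = R.depth y := by
  obtain ⟨w, hw⟩ := exists_walk_of_le hxy
  obtain ⟨q, hq⟩ := w.reachable.exists_walk_length_eq_dist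
  have := dist_le w
  have := depth_le_depth_add_length q
  omega

lemma ancIn_graph_iff : AncIn R.graph R.root x y ↔ R.le x y := by
  have hroot : ∀ z, R.graph.dist R.root z = R.depth z := fun z => by
    simpa [depth_root] using depth_add_dist (R.root_le z)
  rw [AncIn, hroot, hroot]
  refine ⟨fun h => ?_, fun h => depth_add_dist h⟩
  obtain ⟨q, hq⟩ := (graph_connected x y).exists_walk_length_eq_dist
  exact le_of_walk q (by omega)

lemma le_iff_le_of_le_of_depth_eq (huv : R.le u v) (hd : R.depth u + 1 = R.depth v)
    (hyv : y ≠ v) : R.le y u ↔ R.le y v := by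
  refine ⟨fun h => R.trans h huv, fun h => ?_⟩
  refine (R.total_of_le h huv).elim id fun huy => ?_
  have h₁ := depth_le_depth huy
  have h₂ := depth_le_depth h
  by_cases hdy : R.depth y = R.depth u
  · exact eq_of_le_of_depth_le huy hdy.le ▸ R.refl y
  · exact absurd (eq_of_le_of_depth_le h (by omega)) hyv

lemma graph_isBridge (hxy : R.le x y) (hd : R.depth x + 1 = R.depth y) :
    R.graph.IsBridge s(x, y) := by
  rw [isBridge_iff]
  rintro ⟨w⟩
  have hparent : ∀ {p}, R.le p y → R.depth p + 1 = R.depth y → p = x := fun hp hdp =>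
    (R.total_of_le hp hxy).elim (eq_of_le_of_depth_le · (by omega))
      (fun h => (eq_of_le_of_depth_le h (by omega)).symm)
  -- being a descendant of `y` is invariant along every edge except the one to its parent `x`
  have key : ∀ {a c}, (R.graph.deleteEdges {s(x, y)}).Walk a c → (R.le y a ↔ R.le y c) := by
    intro a c w
    induction w with
    | nil => rfl
    | @cons a b c h _ ih =>
      rw [deleteEdges_adj, Set.mem_singleton_iff] at h
      refine Iff.trans ?_ ih
      rcases graph_adj_iff.mp h.1 with h' | h'
      · refine le_iff_le_of_le_of_depth_eq h'.1 h'.2 fun hyb => h.2 ?_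
        subst hyb
        rw [hparent h'.1 h'.2]
      · refine (le_iff_le_of_le_of_depth_eq h'.1 h'.2 fun hya => h.2 ?_).symm
        subst hya
        rw [hparent h'.1 h'.2, Sym2.eq_swap]
  have := depth_le_depth ((key w).mpr (R.refl y))
  omega

lemma graph_isTree : R.graph.IsTree := by
  refine ⟨graph_connected, isAcyclic_iff_forall_adj_isBridge.mpr fun x y h => ?_⟩
  rcases graph_adj_iff.mp h with h | h
  · exact graph_isBridge h.1 h.2
  · exact Sym2.eq_swap ▸ graph_isBridge h.1 h.2

variable (R) {G : SimpleGraph V}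

def toTreeLayout (hG : ∀ ⦃x y⦄, G.Adj x y → R.le x y ∨ R.le y x) : TreeLayout G where
  tree := R.graph
  isTree := graph_isTree
  root := R.root
  layout _ _ h := (hG h).imp ancIn_graph_iff.mpr ancIn_graph_iff.mpr

lemma anc_toTreeLayout_iff (hG : ∀ ⦃x y⦄, G.Adj x y → R.le x y ∨ R.le y x) :
    (R.toTreeLayout hG).Anc x y ↔ R.le x y :=
  ancIn_graph_iff

end RootedTreeOrder

namespace TreeLayout

open SimpleGraph

variable {V : Type*} {G : SimpleGraph V} (L : TreeLayout G) {a d u v w : V}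

def ReachDesc (u v : V) : Prop := ∃ p : G.Walk u v, ∀ z ∈ p.support, L.Anc u z

variable {L}

lemma ReachDesc.anc (h : L.ReachDesc u v) : L.Anc u v :=
  h.elim fun p hp => hp v p.end_mem_support

lemma reachDesc_refl (u : V) : L.ReachDesc u u :=
  ⟨Walk.nil, by simpa using L.anc_refl u⟩

lemma reachDesc_of_adj (h : G.Adj u v) (huv : L.Anc u v) : L.ReachDesc u v :=
  ⟨h.toWalk, by simpa [L.anc_refl u] using huv⟩

lemma reachDesc_of_mem_support {p : G.Walk u v} (hp : ∀ z ∈ p.support, L.Anc u z)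
    (hw : w ∈ p.support) : L.ReachDesc u w := by
  classical
  exact ⟨p.takeUntil w hw, fun z hz => hp z (p.support_takeUntil_subset_support hw hz)⟩

lemma ReachDesc.trans (huv : L.ReachDesc u v) (hvw : L.ReachDesc v w) : L.ReachDesc u w := by
  obtain ⟨p, hp⟩ := huv
  obtain ⟨q, hq⟩ := hvw
  refine ⟨p.append q, fun z hz => ?_⟩
  rcases (Walk.mem_support_append_iff _ _).mp hz with hz | hz
  · exact hp z hz
  · exact (hp v p.end_mem_support).trans (hq z hz)

lemma ReachDesc.total_of_reachDesc (hu : L.ReachDesc u w) (hv : L.ReachDesc v w) :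
    L.ReachDesc u v ∨ L.ReachDesc v u := by
  suffices ∀ {u v}, L.ReachDesc u w → L.ReachDesc v w → L.Anc u v → L.ReachDesc u v from
    (anc_total_of_anc hu.anc hv.anc).imp (this hu hv) (this hv hu)
  rintro u v ⟨p, hp⟩ ⟨q, hq⟩ huv
  refine ⟨p.append q.reverse, fun z hz => ?_⟩
  rcases (Walk.mem_support_append_iff _ _).mp hz with hz | hz
  · exact hp z hz
  · exact huv.trans (hq z (by simpa using hz))

lemma preconnected_induce_reachDesc (u : V) : (G.induce {v | L.ReachDesc u v}).Preconnected := by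
  have hu : ∀ v (hv : L.ReachDesc u v), (G.induce {v | L.ReachDesc u v}).Reachable
      ⟨u, reachDesc_refl u⟩ ⟨v, hv⟩ := fun v ⟨p, hp⟩ =>
    (p.induce _ fun _ hz => reachDesc_of_mem_support hp hz).reachable
  rintro ⟨x, hx⟩ ⟨y, hy⟩
  exact (hu x hx).symm.trans (hu y hy)

lemma StrictAnc.not_reachDesc (h : L.StrictAnc a u) : ¬ L.ReachDesc u a :=
  fun hua => h.2 (h.1.antisymm hua.anc)

lemma anc_of_eq_root_or_reachDesc (h : u = L.root ∨ L.ReachDesc u v) : L.Anc u v :=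
  h.elim (fun h => h ▸ L.root_anc v) ReachDesc.anc

variable (L)

def reachDescOrder : RootedTreeOrder V where
  le x y := x = L.root ∨ L.ReachDesc x y
  refl x := Or.inr (reachDesc_refl x)
  antisymm hxy hyx :=
    (anc_of_eq_root_or_reachDesc hxy).antisymm (anc_of_eq_root_or_reachDesc hyx)
  trans := by
    rintro x y z (hx | hxy) (rfl | hyz)
    exacts [Or.inl hx, Or.inl hx, Or.inl (hxy.anc.antisymm (L.root_anc x)),
      Or.inr (hxy.trans hyz)]
  total_of_le := by
    rintro a b x (rfl | hax) (rfl | hbx)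
    exacts [Or.inl (Or.inl rfl), Or.inl (Or.inl rfl), Or.inr (Or.inl rfl),
      (hax.total_of_reachDesc hbx).imp Or.inr Or.inr]
  root := L.root
  root_le _ := Or.inl rfl

def normalize [Finite V] : TreeLayout G :=
  L.reachDescOrder.toTreeLayout fun _ _ h =>
    (L.layout h).imp (Or.inr <| reachDesc_of_adj h ·) (Or.inr <| reachDesc_of_adj h.symm ·)

variable {L} [Finite V]

lemma normalize_anc_iff : L.normalize.Anc u v ↔ u = L.root ∨ L.ReachDesc u v :=
  RootedTreeOrder.anc_toTreeLayout_iff _ _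

lemma StrictAnc.of_normalize (h : L.normalize.StrictAnc a u) : L.StrictAnc a u :=
  ⟨anc_of_eq_root_or_reachDesc (normalize_anc_iff.mp h.1), h.2⟩

lemma StrictAnc.reachDesc_of_normalize (ha : L.normalize.StrictAnc a u)
    (hd : L.normalize.Anc u d) : L.ReachDesc u d := by
  refine (normalize_anc_iff.mp hd).resolve_left ?_
  rintro rfl
  exact ha.2 ((anc_of_eq_root_or_reachDesc (normalize_anc_iff.mp ha.1)).antisymm (L.root_anc a))

end TreeLayout

section Blocks

open SimpleGraph

variable {V : Type*} {G : SimpleGraph V} {S X B : Set V} {a b d w : V}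

def IsNonseparable (G : SimpleGraph V) (S : Set V) : Prop :=
  (G.induce S).Connected ∧ ∀ x ∈ S, (G.induce (S \ {x})).Preconnected

lemma isNonseparable_pair (h : G.Adj a b) : IsNonseparable G {a, b} := by
  refine ⟨induce_pair_connected_of_adj h, fun x hx ⟨y, hy⟩ ⟨z, hz⟩ => ?_⟩
  obtain rfl : y = z := by
    simp only [Set.mem_sdiff, Set.mem_insert_iff, Set.mem_singleton_iff] at hx hy hz
    grind
  rfl

lemma IsNonseparable.union_support_of_isPath (hS : IsNonseparable G S) (ha : a ∈ S) (hw : w ∈ S)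
    {p : G.Walk a w} (hp : p.IsPath) : IsNonseparable G (S ∪ {z | z ∈ p.support}) := by
  classical
  refine ⟨induce_union_connected hS.1.preconnected p.connected_induce_support.preconnected
    ⟨a, ha, p.start_mem_support⟩, fun x _ => ?_⟩
  set S' := S ∪ {z | z ∈ p.support}
  have hsub : S \ {x} ⊆ S' \ {x} := Set.sdiff_subset_sdiff_left Set.subset_union_left
  have hS' : (G.induce (S \ {x})).Preconnected := by
    by_cases hx : x ∈ S
    · exact hS.2 x hx
    · rw [Set.sdiff_singleton_eq_self hx]
      exact hS.1.preconnected
  have escape : ∀ y (hy : y ∈ S' \ {x}), ∃ s, ∃ hs : s ∈ S \ {x},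
      (G.induce (S' \ {x})).Reachable ⟨y, hy⟩ ⟨s, hsub hs⟩ := by
    rintro y ⟨hyS | hyp, hyx⟩
    · exact ⟨y, ⟨hyS, hyx⟩, Reachable.refl _⟩
    obtain ⟨e, he, q, hq⟩ := hp.exists_walk_to_end_avoiding hyp hyx
    have heS : e ∈ S := by rcases he with rfl | rfl <;> assumption
    have hqS : ∀ z ∈ q.support, z ∈ S' \ {x} := fun z hz =>
      ⟨Or.inr (hq z hz).1, (hq z hz).2⟩
    exact ⟨e, ⟨heS, (hq e q.end_mem_support).2⟩, (q.induce _ hqS).reachable⟩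
  rintro ⟨y, hy⟩ ⟨y', hy'⟩
  obtain ⟨s, hs, hys⟩ := escape y hy
  obtain ⟨s', hs', hys'⟩ := escape y' hy'
  have hss' := (hS' ⟨s, hs⟩ ⟨s', hs'⟩).map (induceHomOfLE G hsub).toHom
  exact hys.trans (hss'.trans hys'.symm)

lemma isBlock_of_maximal_isNonseparable {T : Set V}
    (h : Maximal (fun S => T ⊆ S ∧ IsNonseparable G S) S) : IsBlock G S :=
  ⟨Set.nonempty_coe_sort.mp h.1.2.1.nonempty, h.1.2.1, h.1.2.2,
    fun _ hSS' hc hp => (h.2 ⟨h.1.1.trans hSS', hc, hp⟩ hSS').antisymm hSS'⟩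

lemma exists_isBlock_adj_subset [Finite V] (haX : a ∉ X) (hX : (G.induce X).Preconnected)
    (hd : d ∈ X) (had : G.Adj a d) :
    ∃ B, IsBlock G B ∧ a ∈ B ∧ {e ∈ X | G.Adj a e} ⊆ B := by
  obtain ⟨B, -, hB⟩ := Finite.exists_le_maximal
    (p := fun S => {a, d} ⊆ S ∧ IsNonseparable G S) ⟨subset_rfl, isNonseparable_pair had⟩
  have haB : a ∈ B := hB.1.1 (Set.mem_insert _ _)
  refine ⟨B, isBlock_of_maximal_isNonseparable hB, haB, fun e ⟨heX, hae⟩ => ?_⟩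
  obtain ⟨q, hq, hqX⟩ := (hX ⟨e, heX⟩ ⟨d, hd⟩).exists_isPath_of_induce
  have hp : (Walk.cons hae q).IsPath :=
    (Walk.cons_isPath_iff _ _).mpr ⟨hq, fun h => haX (hqX a h)⟩
  -- the ear `a e … d` through `X` can be added to `B`, so maximality puts `e` in `B`
  have hB' := hB.1.2.union_support_of_isPath haB (hB.1.1 (by simp)) hp
  exact hB.2 ⟨hB.1.1.trans Set.subset_union_left, hB'⟩ Set.subset_union_left
    (Or.inr (by simp))

lemma IsBlock.ncard_adj_le_biconnMaxDegree [Finite V] (hB : IsBlock G B) (ha : a ∈ B) :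
    {e ∈ B | G.Adj a e}.ncard ≤ biconnMaxDegree G :=
  le_csSup (s := {d | ∃ (S : Set V) (v : V), IsBlock G S ∧ v ∈ S ∧
      d = {w ∈ S | G.Adj v w}.ncard})
    ⟨Nat.card V, by rintro _ ⟨S, v, -, -, rfl⟩; exact Set.ncard_le_card _⟩
    ⟨B, a, hB, ha, rfl⟩

lemma ncard_adj_le_biconnMaxDegree_of_notMem [Finite V] (haX : a ∉ X)
    (hX : (G.induce X).Preconnected) : {e ∈ X | G.Adj a e}.ncard ≤ biconnMaxDegree G := by
  rcases Set.eq_empty_or_nonempty {e ∈ X | G.Adj a e} with h | ⟨d, hd, had⟩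
  · simp [h]
  obtain ⟨B, hB, haB, hsub⟩ := exists_isBlock_adj_subset haX hX hd had
  have hle : {e ∈ X | G.Adj a e} ⊆ {e ∈ B | G.Adj a e} := fun e he => ⟨hsub he, he.2⟩
  exact (Set.ncard_le_ncard hle).trans (hB.ncard_adj_le_biconnMaxDegree haB)

end Blocks

section

open SimpleGraph

variable {V : Type*} [Finite V]

lemma nonempty_treeLayout [Nonempty V] (G : SimpleGraph V) : Nonempty (TreeLayout G) := by
  obtain ⟨n, ⟨e⟩⟩ := Finite.exists_equiv_fin V
  obtain ⟨r, hr⟩ := Finite.exists_min e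
  let R : RootedTreeOrder V :=
    { le := fun x y => e x ≤ e y
      refl := fun _ => le_rfl
      antisymm := fun hxy hyx => e.injective (le_antisymm hxy hyx)
      trans := le_trans
      total_of_le := fun _ _ => le_total _ _
      root := r
      root_le := hr }
  exact ⟨R.toTreeLayout fun _ _ _ => le_total _ _⟩

lemma exists_forall_ncard_le_treewidthTL [Nonempty V] (G : SimpleGraph V) :
    ∃ L : TreeLayout G, ∀ u : V,
      {a : V | L.StrictAnc a u ∧ ∃ d : V, L.Anc u d ∧ G.Adj a d}.ncard ≤ treewidthTL G :=
  let ⟨L⟩ := nonempty_treeLayout G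
  Nat.sInf_mem (s := {k | ∃ L : TreeLayout G, ∀ u : V,
    {a : V | L.StrictAnc a u ∧ ∃ d : V, L.Anc u d ∧ G.Adj a d}.ncard ≤ k})
    ⟨Nat.card V, L, fun _ => Set.ncard_le_card _⟩

lemma TreeLayout.ncard_crossing_normalize_le {G : SimpleGraph V} (L : TreeLayout G) (u : V) :
    {p : V × V | L.normalize.StrictAnc p.1 u ∧ L.normalize.Anc u p.2 ∧ G.Adj p.1 p.2}.ncard ≤
      biconnMaxDegree G *
        {a : V | L.StrictAnc a u ∧ ∃ d : V, L.Anc u d ∧ G.Adj a d}.ncard := by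
  refine Set.ncard_le_mul_ncard_of_fst_mem (fun p hp => ?_) fun a ha => ?_
  · exact ⟨hp.1.of_normalize, p.2, (hp.1.reachDesc_of_normalize hp.2.1).anc, hp.2.2⟩
  · refine le_trans (Set.ncard_le_ncard fun d hd => ?_)
      (ncard_adj_le_biconnMaxDegree_of_notMem ha.1.not_reachDesc
        (L.preconnected_induce_reachDesc u))
    exact ⟨hd.1.reachDesc_of_normalize hd.2.1, hd.2.2⟩

end

/-- edge-treewidth is at most (biconnected maximum degree) times treewidth. -/
theorem edgeTreewidth_le_biconnMaxDegree_mul_treewidth {V : Type*} [Fintype V]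
    (G : SimpleGraph V) :
    edgeTreewidth G ≤ biconnMaxDegree G * treewidthTL G := by
  cases isEmpty_or_nonempty V
  · have : IsEmpty (TreeLayout G) := ⟨fun L => IsEmpty.false L.root⟩
    simp [edgeTreewidth]
  obtain ⟨L, hL⟩ := exists_forall_ncard_le_treewidthTL G
  exact Nat.sInf_le ⟨L.normalize, fun u =>
    (L.ncard_crossing_normalize_le u).trans (Nat.mul_le_mul_left _ (hL u))⟩
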